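/- The set of critical points of Hill's lunar Hamiltonian H is exactly {(3^{-1/3}, 0, 0, 3^{-1/3}), (-3^{-1/3}, 0, 0, -3^{-1/3})} (in coordinates (q₁,q₂,p₁,p₂)), and H takes the value -3^{4/3}/2 at both of these points. -/

import Mathlib

/-!
The momenta enter `H` through `(1/2)|p|² + p · (q₂, -q₁)`, so `∂H/∂p = 0` forces `p = (-q₂, q₁)`.
Substituting this into `∂H/∂q = 0` leaves `q₂ |q|⁻³ = 0` and `q₁ (|q|⁻³ - 3) = 0`, hence `q₂ = 0`
and `|q₁|³ = 1/3`. At these two points `H = -(3/2) q₁² - |q₁|⁻¹ = -(9/2) q₁²`.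
-/

/-- Hill's lunar Hamiltonian, on points `x = (q, p)` with `q, p ∈ ℝ²`:
`H(q,p) = (1/2)(p₁²+p₂²) - 1/√(q₁²+q₂²) - q₁² + (1/2)q₂² + p₁q₂ - p₂q₁`. -/
noncomputable def HHLP (x : (ℝ × ℝ) × (ℝ × ℝ)) : ℝ :=
  (1/2) * (x.2.1 ^ 2 + x.2.2 ^ 2) - 1 / Real.sqrt (x.1.1 ^ 2 + x.1.2 ^ 2)
    - x.1.1 ^ 2 + (1/2) * x.1.2 ^ 2 + x.2.1 * x.1.2 - x.2.2 * x.1.1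

open ContinuousLinearMap Real

theorem HasFDerivAt.one_div_sqrt {E : Type*} [NormedAddCommGroup E] [NormedSpace ℝ E]
    {f : E → ℝ} {f' : E →L[ℝ] ℝ} {x : E} (hf : HasFDerivAt f f' x) (hx : 0 < f x) :
    HasFDerivAt (fun y ↦ 1 / √(f y)) ((-(2 * √(f x) ^ 3)⁻¹) • f') x := by
  have hsqrt : √(f x) ≠ 0 := (sqrt_pos.2 hx).ne'
  simp only [one_div]
  refine ((hasDerivAt_inv hsqrt).comp_hasFDerivAt x (hf.sqrt hx.ne')).congr_fderiv ?_
  rw [smul_smul]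
  congr 1
  field_simp

theorem Prod.sq_add_sq_pos {q : ℝ × ℝ} (hq : q ≠ 0) : 0 < q.1 ^ 2 + q.2 ^ 2 := by
  contrapose! hq
  ext <;> simp only [Prod.fst_zero, Prod.snd_zero] <;> nlinarith [sq_nonneg q.1, sq_nonneg q.2]

local notation "ℝ⁴" => (ℝ × ℝ) × (ℝ × ℝ)

local notation "κ" => (3:ℝ) ^ (-(1:ℝ)/3)

noncomputable def coordForm (a b c d : ℝ) : ℝ⁴ →L[ℝ] ℝ :=
  a • (fst ℝ ℝ ℝ).comp (fst ℝ _ _) + b • (snd ℝ ℝ ℝ).comp (fst ℝ _ _)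
    + c • (fst ℝ ℝ ℝ).comp (snd ℝ _ _) + d • (snd ℝ ℝ ℝ).comp (snd ℝ _ _)

@[simp]
theorem coordForm_apply (a b c d : ℝ) (v : ℝ⁴) :
    coordForm a b c d v = a * v.1.1 + b * v.1.2 + c * v.2.1 + d * v.2.2 := by
  simp [coordForm]

theorem coordForm_eq_zero_iff {a b c d : ℝ} :
    coordForm a b c d = 0 ↔ a = 0 ∧ b = 0 ∧ c = 0 ∧ d = 0 := by
  refine ⟨fun h ↦ ?_, ?_⟩
  · have hv (v : ℝ⁴) : coordForm a b c d v = 0 := by rw [h, zero_apply]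
    simp only [coordForm_apply] at hv
    exact ⟨by simpa using hv ((1, 0), (0, 0)), by simpa using hv ((0, 1), (0, 0)),
      by simpa using hv ((0, 0), (1, 0)), by simpa using hv ((0, 0), (0, 1))⟩
  · rintro ⟨rfl, rfl, rfl, rfl⟩
    ext <;> simp

theorem hasFDerivAt_HHLP {x : ℝ⁴} (hx : x.1 ≠ 0) :
    HasFDerivAt HHLP
      (coordForm (x.1.1 / √(x.1.1 ^ 2 + x.1.2 ^ 2) ^ 3 - 2 * x.1.1 - x.2.2)
        (x.1.2 / √(x.1.1 ^ 2 + x.1.2 ^ 2) ^ 3 + x.1.2 + x.2.1)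
        (x.2.1 + x.1.2) (x.2.2 - x.1.1)) x := by
  have hq₁ : HasFDerivAt (fun y : ℝ⁴ ↦ y.1.1) ((fst ℝ ℝ ℝ).comp (fst ℝ _ _)) x :=
    hasFDerivAt_fst.comp x hasFDerivAt_fst
  have hq₂ : HasFDerivAt (fun y : ℝ⁴ ↦ y.1.2) ((snd ℝ ℝ ℝ).comp (fst ℝ _ _)) x :=
    hasFDerivAt_snd.comp x hasFDerivAt_fst
  have hp₁ : HasFDerivAt (fun y : ℝ⁴ ↦ y.2.1) ((fst ℝ ℝ ℝ).comp (snd ℝ _ _)) x :=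
    hasFDerivAt_fst.comp x hasFDerivAt_snd
  have hp₂ : HasFDerivAt (fun y : ℝ⁴ ↦ y.2.2) ((snd ℝ ℝ ℝ).comp (snd ℝ _ _)) x :=
    hasFDerivAt_snd.comp x hasFDerivAt_snd
  have hr := Prod.sq_add_sq_pos hx
  have hpotential := ((hq₁.pow 2).add (hq₂.pow 2)).one_div_sqrt hr
  have hH := (((((((hp₁.pow 2).add (hp₂.pow 2)).const_mul (1 / 2)).sub hpotential).sub
    (hq₁.pow 2)).add ((hq₂.pow 2).const_mul (1 / 2))).add (hp₁.mul hq₂)).sub (hp₂.mul hq₁)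
  refine hH.congr_fderiv ?_
  have hs : √(x.1.1 ^ 2 + x.1.2 ^ 2) ≠ 0 := (sqrt_pos.2 hr).ne'
  refine ContinuousLinearMap.ext fun v ↦ ?_
  simp only [one_div, Nat.add_one_sub_one, pow_one, nsmul_eq_mul, Nat.cast_ofNat, smul_add,
    Pi.add_apply, mul_inv_rev, neg_smul, sub_apply, add_apply, smul_apply, comp_apply, coe_snd',
    coe_fst', smul_eq_mul, neg_apply, coordForm_apply]
  field_simp
  ring

theorem pow_three_three_rpow_neg_third : κ ^ 3 = 1 / 3 := by
  rw [← rpow_natCast, ← rpow_mul (by norm_num)]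
  norm_num

theorem inv_abs_pow_three_eq_three_iff {a : ℝ} : (|a| ^ 3)⁻¹ = 3 ↔ a = κ ∨ a = -κ := by
  have hκ : 0 ≤ κ := by positivity
  rw [← abs_eq hκ, inv_eq_iff_eq_inv, ← one_div, ← pow_three_three_rpow_neg_third]
  exact pow_left_inj₀ (abs_nonneg a) hκ (by norm_num)

theorem hill_critical_equations_iff {a b c d : ℝ} :
    ((a, b) ≠ 0 ∧ a / √(a ^ 2 + b ^ 2) ^ 3 - 2 * a - d = 0 ∧
        b / √(a ^ 2 + b ^ 2) ^ 3 + b + c = 0 ∧ c + b = 0 ∧ d - a = 0) ↔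
      ((a, b), (c, d)) = ((κ, 0), (0, κ)) ∨ ((a, b), (c, d)) = ((-κ, 0), (0, -κ)) := by
  have hκ : κ ≠ 0 := by positivity
  simp only [Prod.mk.injEq]
  constructor
  · rintro ⟨hab, ha, hb, hc, hd⟩
    obtain rfl : c = -b := by linarith
    obtain rfl : a = d := by linarith
    obtain rfl : b = 0 := by
      have hs : √(a ^ 2 + b ^ 2) ≠ 0 := sqrt_ne_zero'.2 (Prod.sq_add_sq_pos hab)
      simpa [hs] using hb
    have ha₀ : a ≠ 0 := by simpa using hab
    have hρ : (|a| ^ 3)⁻¹ = 3 := by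
      rw [zero_pow two_ne_zero, add_zero, sqrt_sq_eq_abs] at ha
      have : a * ((|a| ^ 3)⁻¹ - 3) = 0 := by rw [← ha]; ring
      exact sub_eq_zero.1 ((mul_eq_zero.1 this).resolve_left ha₀)
    rcases inv_abs_pow_three_eq_three_iff.1 hρ with rfl | rfl <;> simp
  · have hsq : √(κ ^ 2) = κ := sqrt_sq (by positivity)
    rintro (⟨⟨rfl, rfl⟩, rfl, rfl⟩ | ⟨⟨rfl, rfl⟩, rfl, rfl⟩)
    all_goals
      simp only [ne_eq, Prod.mk_eq_zero, neg_eq_zero, hκ, and_true, not_false_eq_true, even_two,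
        Even.neg_pow, OfNat.ofNat_ne_zero, zero_pow, add_zero, hsq, pow_three_three_rpow_neg_third,
        one_div, div_inv_eq_mul, neg_mul, mul_neg, sub_neg_eq_add, zero_mul, sub_self, and_self,
        true_and]
      ring

theorem HHLP_of_abs_eq {a : ℝ} (ha : |a| = κ) :
    HHLP ((a, 0), (0, a)) = -(3:ℝ) ^ ((4:ℝ)/3) / 2 := by
  have h43 : (3:ℝ) ^ ((4:ℝ)/3) = 3 / κ := by
    rw [show (4:ℝ)/3 = 1 - (-(1:ℝ)/3) by norm_num, rpow_sub (by norm_num), rpow_one]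
  have ha2 : a ^ 2 = κ ^ 2 := by rw [← sq_abs, ha]
  have hκ : κ ≠ 0 := by positivity
  have hκ3 := pow_three_three_rpow_neg_third
  simp only [HHLP, zero_pow two_ne_zero, add_zero, zero_add, sqrt_sq_eq_abs, ha, h43]
  -- `field_simp` would rewrite `-1/3` to `-(1/3)` in some of the exponents only
  generalize κ = k at hκ ha2 hκ3 ⊢
  field_simp
  linear_combination (-3) * hκ3 - 3 * k * ha2

theorem hill_hamiltonian_critical_points :
    {x : (ℝ × ℝ) × (ℝ × ℝ) | x.1 ≠ 0 ∧ fderiv ℝ HHLP x = 0} =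
      {((((3:ℝ) ^ (-(1:ℝ)/3), (0:ℝ)), ((0:ℝ), (3:ℝ) ^ (-(1:ℝ)/3))) : (ℝ × ℝ) × (ℝ × ℝ)),
       (((-(3:ℝ) ^ (-(1:ℝ)/3), (0:ℝ)), ((0:ℝ), -(3:ℝ) ^ (-(1:ℝ)/3))) : (ℝ × ℝ) × (ℝ × ℝ))} ∧
    HHLP (((3:ℝ) ^ (-(1:ℝ)/3), 0), (0, (3:ℝ) ^ (-(1:ℝ)/3))) = -(3:ℝ) ^ ((4:ℝ)/3) / 2 ∧
    HHLP ((-(3:ℝ) ^ (-(1:ℝ)/3), 0), (0, -(3:ℝ) ^ (-(1:ℝ)/3))) = -(3:ℝ) ^ ((4:ℝ)/3) / 2 := by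
  have hκ : |κ| = κ := abs_of_pos (by positivity)
  refine ⟨?_, HHLP_of_abs_eq hκ, HHLP_of_abs_eq ((abs_neg κ).trans hκ)⟩
  ext ⟨⟨a, b⟩, c, d⟩
  simp only [Set.mem_ofPred_eq, Set.mem_insert_iff, Set.mem_singleton_iff]
  rw [← hill_critical_equations_iff, and_congr_right_iff]
  intro hab
  rw [(hasFDerivAt_HHLP hab).fderiv, coordForm_eq_zero_iff]
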